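/- If a finite word w is rich, then its longest palindromic suffix occurs exactly once in w. -/

import Mathlib

open List

variable {A : Type*}

/-- All factors (contiguous subwords) of a word, as a list. -/
def Factors (w : List A) : List (List A) := w.tails.flatMap List.inits

/-- The set of distinct palindromic factors of `w` (including the empty word). -/
def palFactors [DecidableEq A] (w : List A) : Finset (List A) :=
  ((Factors w).filter (fun u => decide (u.reverse = u))).toFinset

/-- A word is rich if it has exactly `|w| + 1` distinct palindromic factors. -/
def IsRich [DecidableEq A] (w : List A) : Prop :=
  (palFactors w).card = w.length + 1

/-- The defect of a finite word. -/
def defect [DecidableEq A] (w : List A) : ℕ :=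
  w.length + 1 - (palFactors w).card

/-- `u` is a (finite) factor of the infinite word `z`. -/
def FactorOfInf (u : List A) (z : ℕ → A) : Prop :=
  ∃ i, u = (List.range u.length).map (fun k => z (i + k))

/-- An infinite word is rich if all of its finite factors are rich. -/
def InfRich [DecidableEq A] (z : ℕ → A) : Prop :=
  ∀ u : List A, FactorOfInf u z → IsRich u

/-- The longest palindromic suffix of `w`. -/
def lps [DecidableEq A] (w : List A) : List A :=
  (w.tails.find? (fun u => decide (u.reverse = u))).getD []

/-- The number of occurrences of `u` as a factor of `w` (counted by position). -/
def occCount [DecidableEq A] (u w : List A) : ℕ :=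
  w.tails.countP (fun t => decide (u <+: t))

/-- The periodic infinite word `u^∞`. -/
def periodicWord (u : List A) (hu : u ≠ []) : ℕ → A :=
  fun i => u.get ⟨i % u.length, Nat.mod_lt _ (List.length_pos_iff.mpr hu)⟩

/-!
Appending a letter to `v` creates at most one new palindromic factor, namely the longest
palindromic suffix `p` of `v ++ [a]`: a shorter palindromic suffix is also a proper prefix of
`p`, hence a factor of `v`. So a word `w` has at most `|w| + 1` palindromic factors, and when
`w = v ++ [a]` is rich, `p` cannot occur in `v`; its only occurrence in `w` is as a suffix.
-/

namespace List

variable {α : Type*}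

theorem infix_of_prefix_of_suffix_concat {u t v : List α} {a : α} (hut : u <+: t)
    (htv : t <:+ v ++ [a]) (hlt : u.length < t.length) : u <:+: v := by
  rcases suffix_concat_iff.mp htv with rfl | ⟨s, rfl, hsv⟩
  · simp at hlt
  rcases prefix_concat_iff.mp hut with rfl | hus
  · simp at hlt
  · exact hus.isInfix.trans hsv.isInfix

theorem nodup_tails (l : List α) : l.tails.Nodup := by
  induction l with
  | nil => simp
  | cons a l ih =>
    refine nodup_cons.mpr ⟨fun h => ?_, ih⟩
    simpa using ((mem_tails _ _).mp h).length_le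

end List

section Words

variable [DecidableEq A]

theorem mem_palFactors {u w : List A} :
    u ∈ palFactors w ↔ u <:+: w ∧ u.reverse = u := by
  simp only [palFactors, Factors, mem_toFinset, mem_filter, mem_flatMap, mem_tails, mem_inits,
    decide_eq_true_eq, infix_iff_prefix_suffix]
  tauto

theorem palFactors_nil : palFactors ([] : List A) = {[]} := by
  ext u
  simp +contextual [mem_palFactors, infix_nil]

theorem lps_isSuffix_and_reverse_eq (w : List A) : lps w <:+ w ∧ (lps w).reverse = lps w := by
  obtain ⟨u, hu⟩ : ∃ u, w.tails.find? (fun u => decide (u.reverse = u)) = some u :=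
    Option.isSome_iff_exists.mp (find?_isSome.mpr ⟨[], by simp, by simp⟩)
  simp only [lps, hu, Option.getD_some]
  exact ⟨(mem_tails _ _).mp (mem_of_find?_eq_some hu), by simpa using find?_some hu⟩

theorem suffix_lps_of_reverse_eq {u w : List A} (hu : u <:+ w) (hpal : u.reverse = u) :
    u <:+ lps w := by
  induction w with
  | nil => simpa [lps] using hu
  | cons a l ih =>
    by_cases hal : (a :: l).reverse = a :: l
    · simpa [lps, find?_cons, hal] using hu
    · have hlps : lps (a :: l) = lps l := by
        simp only [lps, tails_cons, find?_cons, decide_eq_false hal]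
      rw [hlps]
      rcases suffix_cons_iff.mp hu with rfl | hul
      · exact absurd hpal hal
      · exact ih hul

theorem infix_of_reverse_eq_of_ne_lps {u v : List A} {a : A} (hu : u <:+: v ++ [a])
    (hpal : u.reverse = u) (hne : u ≠ lps (v ++ [a])) : u <:+: v := by
  obtain ⟨t, hut, htv⟩ := infix_iff_prefix_suffix.mp hu
  rcases hut.length_le.lt_or_eq with hlt | hlen
  · exact infix_of_prefix_of_suffix_concat hut htv hlt
  obtain rfl := hut.eq_of_length hlen
  obtain ⟨hp, hppal⟩ := lps_isSuffix_and_reverse_eq (v ++ [a])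
  have hsuf : u <:+ lps (v ++ [a]) := suffix_lps_of_reverse_eq htv hpal
  have hpre : u <+: lps (v ++ [a]) := by
    simpa [hpal, hppal] using reverse_prefix.mpr hsuf
  have hlt : u.length < (lps (v ++ [a])).length :=
    hsuf.length_le.lt_of_ne fun h => hne (hsuf.eq_of_length h)
  exact infix_of_prefix_of_suffix_concat hpre hp hlt

theorem palFactors_concat_subset (v : List A) (a : A) :
    palFactors (v ++ [a]) ⊆ insert (lps (v ++ [a])) (palFactors v) := by
  intro u hu
  obtain ⟨hinf, hpal⟩ := mem_palFactors.mp hu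
  rw [Finset.mem_insert, mem_palFactors]
  by_cases hne : u = lps (v ++ [a])
  · exact .inl hne
  · exact .inr ⟨infix_of_reverse_eq_of_ne_lps hinf hpal hne, hpal⟩

theorem card_palFactors_le (w : List A) : (palFactors w).card ≤ w.length + 1 := by
  induction w using reverseRecOn with
  | nil => simp [palFactors_nil]
  | append_singleton v a ih =>
    calc (palFactors (v ++ [a])).card
        ≤ (insert (lps (v ++ [a])) (palFactors v)).card :=
          Finset.card_le_card (palFactors_concat_subset v a)
      _ ≤ (palFactors v).card + 1 := Finset.card_insert_le _ _
      _ ≤ (v ++ [a]).length + 1 := by simp; omega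

theorem not_infix_lps_of_isRich {v : List A} {a : A} (hw : IsRich (v ++ [a])) :
    ¬ lps (v ++ [a]) <:+: v := by
  intro hinf
  have hmem : lps (v ++ [a]) ∈ palFactors v :=
    mem_palFactors.mpr ⟨hinf, (lps_isSuffix_and_reverse_eq _).2⟩
  have hle : (palFactors (v ++ [a])).card ≤ (palFactors v).card :=
    Finset.card_le_card (Finset.insert_eq_of_mem hmem ▸ palFactors_concat_subset v a)
  have := card_palFactors_le v
  rw [IsRich, length_append, length_singleton] at hw
  omega

theorem occCount_eq_one_of_suffix_of_not_infix {u v : List A} {a : A} (hu : u <:+ v ++ [a])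
    (hv : ¬ u <:+: v) : occCount u (v ++ [a]) = 1 := by
  have hocc : ∀ t ∈ (v ++ [a]).tails, decide (u <+: t) = true ↔ (t == u) = true := by
    intro t ht
    simp only [decide_eq_true_eq, beq_iff_eq]
    refine ⟨fun hut => ?_, fun htu => htu ▸ prefix_refl u⟩
    by_contra hne
    exact hv (infix_of_prefix_of_suffix_concat hut ((mem_tails _ _).mp ht)
      (hut.length_le.lt_of_ne fun h => hne (hut.eq_of_length h).symm))
  rw [occCount, countP_congr hocc, ← count]
  exact count_eq_one_of_mem (nodup_tails _) ((mem_tails _ _).mpr hu)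

end Words

theorem rich_lps_unioccurrent [DecidableEq A] (w : List A) (hw : IsRich w) :
    occCount (lps w) w = 1 := by
  rcases eq_nil_or_concat' w with rfl | ⟨v, a, rfl⟩
  · simp [occCount, lps]
  · exact occCount_eq_one_of_suffix_of_not_infix (lps_isSuffix_and_reverse_eq _).1
      (not_infix_lps_of_isRich hw)
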